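/- arXiv:2508.07360 — 2 statements merged into one kernel-verified Lean document; each statement's English description precedes it below -/
import Mathlib

section
/- Let p > 1, γ > 0, c > 0, ϑ > 0 and define f(t) = (ϑt/(p−1))^{p−1} · ( c/(−((p−1)/ϑ) ln t)^γ − ϑ ) for t ∈ (0,1). Then f(t) ≥ 0 if and only if e^{−(ϑ/(p−1))(c/ϑ)^{1/γ}} ≤ t < 1, and f is strictly increasing on [e^{−(ϑ/(p−1))(c/ϑ)^{1/γ}}, 1). -/
open Real Set

/-! With `L(t) = -((p-1)/ϑ) ln t`, which decreases from `∞` to `0` on `(0,1)`, the bracket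
`c / L^γ - ϑ` is strictly increasing in `t` and is nonnegative exactly when `L ≤ (c/ϑ)^{1/γ}`,
i.e. when `t` is at least the threshold. The prefactor `(ϑt/(p-1))^{p-1}` is positive and
increasing, so it neither changes the sign nor spoils strict monotonicity where the bracket is
nonnegative. -/

lemma MonotoneOn.mul_strictMonoOn {α M₀ : Type*} [Preorder α] [MulZeroClass M₀]
    [PartialOrder M₀] [PosMulStrictMono M₀] [MulPosMono M₀] {f g : α → M₀} {s : Set α}
    (hf : MonotoneOn f s) (hg : StrictMonoOn g s) (hf₀ : ∀ x ∈ s, 0 < f x)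
    (hg₀ : ∀ x ∈ s, 0 ≤ g x) :
    StrictMonoOn (f * g) s := fun x hx y hy h ↦
  mul_lt_mul' (hf hx hy h.le) (hg hx hy h) (hg₀ x hx) (hf₀ y hy)

section

variable {a c γ θ : ℝ}

lemma sub_nonneg_div_rpow_iff (hc : 0 < c) (hθ : 0 < θ) (hγ : 0 < γ) {L : ℝ} (hL : 0 < L) :
    0 ≤ c / L ^ γ - θ ↔ L ≤ (c / θ) ^ (1 / γ) := by
  rw [sub_nonneg, le_div_iff₀ (rpow_pos_of_pos hL γ), one_div,
    le_rpow_inv_iff_of_pos hL.le (div_pos hc hθ).le hγ, le_div_iff₀ hθ, mul_comm]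

lemma neg_mul_log_le_iff (ha : 0 < a) {t K : ℝ} (ht : 0 < t) :
    -a * log t ≤ K ↔ exp (-a⁻¹ * K) ≤ t := by
  rw [← le_log_iff_exp_le ht, neg_mul a⁻¹, ← div_eq_inv_mul, neg_le, le_div_iff₀ ha, neg_mul,
    neg_mul, mul_comm]

lemma neg_mul_log_pos (ha : 0 < a) {t : ℝ} (ht : t ∈ Ioo (0 : ℝ) 1) : 0 < -a * log t :=
  mul_pos_of_neg_of_neg (neg_lt_zero.2 ha) (log_neg ht.1 ht.2)

lemma sub_nonneg_div_rpow_neg_mul_log_iff (ha : 0 < a) (hc : 0 < c) (hθ : 0 < θ) (hγ : 0 < γ)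
    {t : ℝ} (ht : t ∈ Ioo (0 : ℝ) 1) :
    0 ≤ c / (-a * log t) ^ γ - θ ↔ exp (-a⁻¹ * (c / θ) ^ (1 / γ)) ≤ t :=
  (sub_nonneg_div_rpow_iff hc hθ hγ (neg_mul_log_pos ha ht)).trans (neg_mul_log_le_iff ha ht.1)

lemma strictMonoOn_div_rpow_neg_mul_log_sub (ha : 0 < a) (hc : 0 < c) (hγ : 0 < γ) (θ : ℝ) :
    StrictMonoOn (fun t ↦ c / (-a * log t) ^ γ - θ) (Ioo 0 1) := by
  intro x hx y hy hxy
  have hL : -a * log y < -a * log x :=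
    mul_lt_mul_of_neg_left (log_lt_log hx.1 hxy) (neg_lt_zero.2 ha)
  have hLγ := rpow_lt_rpow (neg_mul_log_pos ha hy).le hL hγ
  exact sub_lt_sub_right
    (div_lt_div_of_pos_left hc (rpow_pos_of_pos (neg_mul_log_pos ha hy) γ) hLγ) θ

end

/-- Sign and monotonicity of `f(t) = (θt/(p-1))^{p-1} (c/(-((p-1)/θ) ln t)^γ - θ)` on (0,1). -/
theorem sign_and_monotonicity (p γ c θ : ℝ) (hp : 1 < p) (hγ : 0 < γ) (hc : 0 < c)
    (hθ : 0 < θ) (f : ℝ → ℝ)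
    (hf : ∀ t ∈ Ioo (0:ℝ) 1,
      f t = (θ * t / (p - 1)) ^ (p - 1) *
        (c / (-((p - 1) / θ) * Real.log t) ^ γ - θ)) :
    (∀ t ∈ Ioo (0:ℝ) 1,
      (0 ≤ f t ↔ Real.exp (-(θ / (p - 1)) * (c / θ) ^ (1 / γ)) ≤ t)) ∧
    StrictMonoOn f (Ico (Real.exp (-(θ / (p - 1)) * (c / θ) ^ (1 / γ))) 1) := by
  have hp₁ : 0 < p - 1 := sub_pos.2 hp
  have ha : 0 < (p - 1) / θ := div_pos hp₁ hθ
  have hsign : ∀ t ∈ Ioo (0:ℝ) 1, 0 ≤ c / (-((p - 1) / θ) * log t) ^ γ - θ ↔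
      exp (-(θ / (p - 1)) * (c / θ) ^ (1 / γ)) ≤ t := fun t ht ↦ by
    simpa only [inv_div] using sub_nonneg_div_rpow_neg_mul_log_iff ha hc hθ hγ ht
  have hpre_pos : ∀ t ∈ Ioo (0:ℝ) 1, 0 < (θ * t / (p - 1)) ^ (p - 1) := fun t ht ↦
    rpow_pos_of_pos (div_pos (mul_pos hθ ht.1) hp₁) _
  have hsub : Ico (exp (-(θ / (p - 1)) * (c / θ) ^ (1 / γ))) 1 ⊆ Ioo 0 1 :=
    fun t ht ↦ ⟨(exp_pos _).trans_le ht.1, ht.2⟩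
  refine ⟨fun t ht ↦ by
    rw [hf t ht, mul_nonneg_iff_of_pos_left (hpre_pos t ht), hsign t ht], ?_⟩
  have hpre_mono : MonotoneOn (fun t : ℝ ↦ (θ * t / (p - 1)) ^ (p - 1)) (Ioo 0 1) :=
    fun x hx y _ hxy ↦ rpow_le_rpow (div_pos (mul_pos hθ hx.1) hp₁).le (by gcongr) hp₁.le
  refine (MonotoneOn.mul_strictMonoOn (hpre_mono.mono hsub)
    ((strictMonoOn_div_rpow_neg_mul_log_sub ha hc hγ θ).mono hsub)
    (fun t ht ↦ hpre_pos t (hsub ht)) (fun t ht ↦ (hsign t (hsub ht)).2 ht.1)).congr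
    fun t ht ↦ (hf t (hsub ht)).symm
end

section
/- Let p > 1, γ > 1, λ₁ > 0, s > 0 and let φ be a positive C¹ function. Define w = s φ^{p/(γ+p−1)}. Then, pointwise wherever φ > 0 and −Δ_p φ = λ₁ φ^{p−1}, one has −Δ_p w = a/w^γ with a = s^{γ+p−1} (p/(γ+p−1))^{p−1} [ λ₁ φ^p + ((γ−1)(p−1)/(γ+p−1)) |∇φ|^p ]. -/
open Real

/-- The p-Laplace operator `Δ_p v = div(|∇v|^{p-2} ∇v)`, computed classically. -/
noncomputable def pLaplacian {N : ℕ} (p : ℝ) (v : EuclideanSpace ℝ (Fin N) → ℝ)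
    (x : EuclideanSpace ℝ (Fin N)) : ℝ :=
  ∑ i : Fin N,
    fderiv ℝ (fun y => ‖gradient v y‖ ^ (p - 2) * gradient v y i) x
      (EuclideanSpace.single i 1)

/-!
With `β = p/(γ+p-1)` one has `∇w = sβ φ^{β-1} ∇φ`, so the `p`-flux `|∇w|^{p-2}∇w` is
`A = (sβ)^{p-1} φ^{(β-1)(p-1)}` times that of `φ`, and the product rule gives
`Δ_p w = (sβ)^{p-1} φ^{(β-1)(p-1)-1} ((β-1)(p-1)|∇φ|^p + φ Δ_p φ)`.
Insert the eigenvalue equation; `β` is chosen so that `(β-1)(p-1) - 1 = -βγ`, which turns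
the prefactor `φ^{(β-1)(p-1)-1}` into `s^γ / w^γ`.
-/

open InnerProductSpace

lemma gradient_const_mul_rpow {E : Type*} [NormedAddCommGroup E] [InnerProductSpace ℝ E]
    [CompleteSpace E] {f : E → ℝ} {x : E} (hf : DifferentiableAt ℝ f x)
    (hfx : f x ≠ 0) (c b : ℝ) :
    gradient (fun y => c * f y ^ b) x = (c * (b * f x ^ (b - 1))) • gradient f x := by
  rw [gradient, ((hf.hasFDerivAt.rpow_const (Or.inl hfx)).const_mul c).fderiv, map_smul,
    map_smul, smul_smul, gradient]

/-- If `g` is not differentiable at `x`, neither is `A * g` (divide by `A`), so both sides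
vanish. This covers the critical points, where the `p`-flux need not be differentiable. -/
lemma fderiv_mul_of_ne_zero {E : Type*} [NormedAddCommGroup E] [NormedSpace ℝ E]
    {A g : E → ℝ} {x : E} (hA : Differentiable ℝ A) (hA0 : ∀ y, A y ≠ 0)
    (hg : DifferentiableAt ℝ g x ∨ g x = 0) :
    fderiv ℝ (fun y => A y * g y) x = A x • fderiv ℝ g x + g x • fderiv ℝ A x := by
  by_cases hgd : DifferentiableAt ℝ g x
  · exact fderiv_fun_mul (hA x) hgd
  have hAg : ¬DifferentiableAt ℝ (fun y => A y * g y) x := fun h =>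
    hgd ((((hA x).inv (hA0 x)).fun_mul h).congr_of_eventuallyEq (.of_forall fun y => by
      simp [hA0 y]))
  rw [fderiv_zero_of_not_differentiableAt hAg, fderiv_zero_of_not_differentiableAt hgd,
    hg.resolve_left hgd]
  simp

lemma rpow_sub_two_mul_sq {p t : ℝ} (hp : p ≠ 0) (ht : 0 ≤ t) :
    t ^ (p - 2) * t ^ 2 = t ^ p := by
  rcases ht.eq_or_lt with h | h
  · rw [← h, zero_rpow hp]
    simp
  · rw [← rpow_natCast, ← rpow_add h]
    norm_num

lemma norm_smul_rpow_mul_apply {ι : Type*} [Fintype ι] {c : ℝ} (hc : 0 < c) (p : ℝ)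
    (v : EuclideanSpace ℝ ι) (i : ι) :
    ‖c • v‖ ^ (p - 2) * (c • v) i = c ^ (p - 1) * (‖v‖ ^ (p - 2) * v i) := by
  rw [norm_smul, norm_of_nonneg hc.le, mul_rpow hc.le (norm_nonneg v), PiLp.smul_apply,
    smul_eq_mul, show p - 1 = p - 2 + 1 by ring, rpow_add_one hc.ne']
  ring

section PLaplacian

variable {N : ℕ}

lemma gradient_apply_eq_fderiv (f : EuclideanSpace ℝ (Fin N) → ℝ)
    (x : EuclideanSpace ℝ (Fin N)) (i : Fin N) :
    gradient f x i = fderiv ℝ f x (EuclideanSpace.single i 1) := by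
  rw [← inner_gradient_left, EuclideanSpace.inner_single_right]
  simp

lemma differentiableAt_flux_or_eq_zero {v : EuclideanSpace ℝ (Fin N) → ℝ}
    (hv : ContDiff ℝ 2 v) (p : ℝ) (x : EuclideanSpace ℝ (Fin N)) (i : Fin N) :
    DifferentiableAt ℝ (fun y => ‖gradient v y‖ ^ (p - 2) * gradient v y i) x ∨
      ‖gradient v x‖ ^ (p - 2) * gradient v x i = 0 := by
  by_cases h0 : gradient v x = 0
  · simp [h0]
  have hgrad : ContDiff ℝ 1 (gradient v) :=
    (toDual ℝ _).symm.contDiff.comp (hv.fderiv_right (by norm_num))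
  have hnorm : DifferentiableAt ℝ (fun y => ‖gradient v y‖) x :=
    (ContDiffAt.norm ℝ hgrad.contDiffAt h0).differentiableAt one_ne_zero
  have hcoord : DifferentiableAt ℝ (fun y => gradient v y i) x :=
    (EuclideanSpace.proj (𝕜 := ℝ) i).differentiableAt.comp x
      (hgrad.differentiable one_ne_zero x)
  exact .inl ((hnorm.rpow_const (.inl (norm_ne_zero_iff.mpr h0))).mul hcoord)

lemma pLaplacian_of_flux_eq_mul {p : ℝ} {u v A : EuclideanSpace ℝ (Fin N) → ℝ}
    (hv : ContDiff ℝ 2 v) (hA : Differentiable ℝ A) (hA0 : ∀ y, A y ≠ 0)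
    (hflux : ∀ y i, ‖gradient u y‖ ^ (p - 2) * gradient u y i =
      A y * (‖gradient v y‖ ^ (p - 2) * gradient v y i))
    (x : EuclideanSpace ℝ (Fin N)) :
    pLaplacian p u x =
      ‖gradient v x‖ ^ (p - 2) * inner ℝ (gradient A x) (gradient v x) +
        A x * pLaplacian p v x := by
  simp only [pLaplacian, hflux, Finset.mul_sum, PiLp.inner_apply, RCLike.inner_apply,
    conj_trivial, ← Finset.sum_add_distrib]
  refine Finset.sum_congr rfl fun i _ => ?_
  rw [fderiv_mul_of_ne_zero hA hA0 (differentiableAt_flux_or_eq_zero hv p x i),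
    gradient_apply_eq_fderiv A]
  simp only [add_apply, smul_apply, smul_eq_mul]
  ring

theorem pLaplacian_const_mul_rpow {p s β : ℝ} (hp : p ≠ 0) (hs : 0 < s) (hβ : 0 < β)
    {φ : EuclideanSpace ℝ (Fin N) → ℝ} (hφ : ContDiff ℝ 2 φ) (hφpos : ∀ y, 0 < φ y)
    (x : EuclideanSpace ℝ (Fin N)) :
    pLaplacian p (fun y => s * φ y ^ β) x =
      (s * β) ^ (p - 1) * φ x ^ ((β - 1) * (p - 1) - 1) *
        ((β - 1) * (p - 1) * ‖gradient φ x‖ ^ p + φ x * pLaplacian p φ x) := by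
  set m := (β - 1) * (p - 1)
  have hφd : Differentiable ℝ φ := hφ.differentiable (by norm_num)
  have hA : Differentiable ℝ fun y => (s * β) ^ (p - 1) * φ y ^ m := fun y =>
    ((hφd y).rpow_const (.inl (hφpos y).ne')).const_mul _
  have hA0 : ∀ y, (s * β) ^ (p - 1) * φ y ^ m ≠ 0 := fun y =>
    (mul_pos (rpow_pos_of_pos (mul_pos hs hβ) _) (rpow_pos_of_pos (hφpos y) _)).ne'
  have hflux : ∀ y i, ‖gradient (fun y => s * φ y ^ β) y‖ ^ (p - 2) *
      gradient (fun y => s * φ y ^ β) y i =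
        (s * β) ^ (p - 1) * φ y ^ m * (‖gradient φ y‖ ^ (p - 2) * gradient φ y i) := by
    intro y i
    have hc : 0 < s * (β * φ y ^ (β - 1)) :=
      mul_pos hs (mul_pos hβ (rpow_pos_of_pos (hφpos y) _))
    rw [gradient_const_mul_rpow (hφd y) (hφpos y).ne', norm_smul_rpow_mul_apply hc,
      ← mul_assoc s, mul_rpow (mul_pos hs hβ).le (rpow_pos_of_pos (hφpos y) _).le,
      ← rpow_mul (hφpos y).le]
  rw [pLaplacian_of_flux_eq_mul hφ hA hA0 hflux,
    gradient_const_mul_rpow (hφd x) (hφpos x).ne', real_inner_smul_left,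
    real_inner_self_eq_norm_sq, ← rpow_sub_two_mul_sq hp (norm_nonneg _),
    rpow_sub_one (hφpos x).ne']
  have := (hφpos x).ne'
  field_simp

end PLaplacian

theorem barrier_computation_general {N : ℕ} (p γ lam₁ s : ℝ) (hp : 1 < p) (hγ : 1 < γ)
    (hs : 0 < s)
    (φ : EuclideanSpace ℝ (Fin N) → ℝ) (hφ : ContDiff ℝ 2 φ) (hφpos : ∀ y, 0 < φ y)
    (w : EuclideanSpace ℝ (Fin N) → ℝ)
    (hw : ∀ y, w y = s * φ y ^ (p / (γ + p - 1))) :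
    ∀ x, -pLaplacian p φ x = lam₁ * φ x ^ (p - 1) →
      -pLaplacian p w x =
        (s ^ (γ + p - 1) * (p / (γ + p - 1)) ^ (p - 1) *
          (lam₁ * φ x ^ p +
            ((γ - 1) * (p - 1) / (γ + p - 1)) * ‖gradient φ x‖ ^ p)) / w x ^ γ := by
  intro x hx
  have hq : 0 < γ + p - 1 := by linarith
  set β := p / (γ + p - 1)
  obtain rfl : w = fun y => s * φ y ^ β := funext hw
  have hφx := hφpos x
  have hexp : (β - 1) * (p - 1) - 1 = -(β * γ) := by
    simp only [β]; field_simp; ring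
  have hcoef : (β - 1) * (p - 1) = -((γ - 1) * (p - 1) / (γ + p - 1)) := by
    simp only [β]; field_simp; ring
  rw [pLaplacian_const_mul_rpow (by positivity) hs (by positivity) hφ hφpos,
    neg_eq_iff_eq_neg.mp hx, hexp, hcoef, rpow_neg hφx.le,
    mul_rpow hs.le (rpow_nonneg hφx.le _), ← rpow_mul hφx.le,
    mul_rpow hs.le (by positivity), show γ + p - 1 = γ + (p - 1) by ring, rpow_add hs,
    rpow_sub_one hφx.ne' p]
  field_simp
  ring

/-- Barrier computation: for `w = s φ^{p/(γ+p-1)}`, with `φ` a positive eigenfunction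
`-Δ_p φ = λ₁ φ^{p-1}`, one has `-Δ_p w = a / w^γ` with the explicit coefficient `a`. -/
theorem barrier_computation {N : ℕ} (p γ lam₁ s : ℝ) (hp : 1 < p) (hγ : 1 < γ)
    (hlam₁ : 0 < lam₁) (hs : 0 < s)
    (φ : EuclideanSpace ℝ (Fin N) → ℝ) (hφ : ContDiff ℝ 2 φ) (hφpos : ∀ y, 0 < φ y)
    (w : EuclideanSpace ℝ (Fin N) → ℝ)
    (hw : ∀ y, w y = s * φ y ^ (p / (γ + p - 1))) :
    ∀ x, -pLaplacian p φ x = lam₁ * φ x ^ (p - 1) →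
      -pLaplacian p w x =
        (s ^ (γ + p - 1) * (p / (γ + p - 1)) ^ (p - 1) *
          (lam₁ * φ x ^ p +
            ((γ - 1) * (p - 1) / (γ + p - 1)) * ‖gradient φ x‖ ^ p)) / w x ^ γ :=
  barrier_computation_general p γ lam₁ s hp hγ hs φ hφ hφpos w hw
end
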